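/- Let B_0(t) = Γ(m/2 − 1) ∑_{l≥0} t^l/(l! Γ(l + m/2 − 1)) and let (x|z) = 2x_0 z_0 + 2∑_{k=1}^{m−1} x_k z_k. Then the function B_0(x|z), viewed as a polynomial-series in z for fixed x, is an eigenfunction of the modified Bessel operators in z: B̃(z_i) B_0(x|z) = 4 x_i B_0(x|z) for all i ∈ {0,…,m−1}, where the identity holds coefficientwise in the formal power series expansion, modulo the ideal ⟨R²_x⟩ in the x-variables. -/

import Mathlib

open MvPolynomial

noncomputable section

/-- Complex polynomials in the variables `z_0, …, z_{m−1}`. -/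
abbrev Pm (m : ℕ) := MvPolynomial (Fin m) ℂ

/-- The diagonal entries of the bilinear form `β`: `β_{00} = −1`, `β_{kk} = 1` for `k ≥ 1`. -/
def sgn (m : ℕ) (i : Fin m) : ℂ := if (i : ℕ) = 0 then -1 else 1

/-- The plain partial derivative `∂^i` as a linear operator. -/
def DOp (m : ℕ) (i : Fin m) : Module.End ℂ (Pm m) := (pderiv i).toLinearMap

/-- The lowered partial derivative `∂_i = ∑_k β_{ik} ∂^k`. -/
def dlow (m : ℕ) (i : Fin m) : Module.End ℂ (Pm m) := sgn m i • DOp m i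

/-- Multiplication by the variable `z_i`. -/
def mulX (m : ℕ) (i : Fin m) : Module.End ℂ (Pm m) := LinearMap.mulLeft ℂ (X i)

/-- The Euler operator `E = ∑_{i,j} β^{ij} z_i ∂_j`. -/
def EOp (m : ℕ) : Module.End ℂ (Pm m) := ∑ i, sgn m i • (mulX m i * dlow m i)

/-- The Laplacian `Δ = ∑_{i,j} β^{ij} ∂_i ∂_j`. -/
def LapOp (m : ℕ) : Module.End ℂ (Pm m) := ∑ i, sgn m i • (dlow m i * dlow m i)

/-- The Bessel operator `B(z_i) = (m − 2 + 2E)∂_i − z_i Δ` (parameter `λ = 2 − m`). -/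
def BOp (m : ℕ) (i : Fin m) : Module.End ℂ (Pm m) :=
  (((m : ℂ) - 2) • (1 : Module.End ℂ (Pm m)) + (2 : ℂ) • EOp m) * dlow m i
    - mulX m i * LapOp m

/-- The modified Bessel operator: `B̃(z_0) = −B(z_0)`, `B̃(z_k) = B(z_k)` for `k ≥ 1`. -/
def BtOp (m : ℕ) (i : Fin m) : Module.End ℂ (Pm m) := sgn m i • BOp m i

/-- The Bessel–Fischer product `⟨p,q⟩_B := (p(B̃) q̄)(0)`: substitute the modified
Bessel operators for the variables of `p`, apply to the coefficient-conjugate of `q`,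
and evaluate at `0`. -/
def BF (m : ℕ) (p q : Pm m) : ℂ :=
  eval (0 : Fin m → ℂ)
    (((∑ α ∈ p.support, p.coeff α • (List.ofFn fun i : Fin m => (BtOp m i) ^ (α i)).prod) :
        Module.End ℂ (Pm m)) (map (starRingEnd ℂ) q))

/-- The angular momentum operator `L_{ij} = z_i ∂_j − z_j ∂_i`. -/
def LOp (m : ℕ) (i j : Fin m) : Module.End ℂ (Pm m) :=
  mulX m i * dlow m j - mulX m j * dlow m i

/-- The squared radial coordinate `R² = ∑_{i,j} β^{ij} z_i z_j`. -/
def R2 (m : ℕ) : Pm m := ∑ i, sgn m i • (X i * X i)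

/-- The coefficient `Γ(m/2 − 1)/(l! Γ(l + m/2 − 1))` of `(x|z)^l` in the series
expansion of `B_0(x|z)`. -/
def Bcoef (m : ℕ) (l : ℕ) : ℂ :=
  Complex.Gamma ((m : ℂ) / 2 - 1) /
    ((l.factorial : ℂ) * Complex.Gamma ((l : ℂ) + (m : ℂ) / 2 - 1))

/-- The polynomial `(x|z) = 2x_0 z_0 + 2∑_{k≥1} x_k z_k` in `z`, for fixed `x`. -/
def xz (m : ℕ) (x : Fin m → ℂ) : Pm m := ∑ i, C (2 * x i) * X i

/-!
On the null cone `R²_x = 0` the Laplacian kills every power of the linear form `(x|z)`, since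
`Δ (x|z)^l` is a multiple of `∑ β^{ii} (2x_i)² = 4 R²_x`. As `(x|z)^l` is homogeneous of degree `l`,
the Euler operator acts on `∂_i (x|z)^l` by `l − 1`, so `B̃(z_i)` maps `(x|z)^l` to
`4 x_i l (l + m/2 − 2) (x|z)^{l−1}`. The Gamma recursion `Γ(s + 1) = s Γ(s)` turns this factor into
the ratio of consecutive series coefficients of `B_0`.
-/

lemma sgn_mul_self (m : ℕ) (i : Fin m) : sgn m i * sgn m i = 1 := by
  unfold sgn; split <;> norm_num

lemma dlow_apply (m : ℕ) (i : Fin m) (q : Pm m) : dlow m i q = sgn m i • pderiv i q := rfl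

lemma EOp_apply (m : ℕ) (q : Pm m) : EOp m q = ∑ i, X i * pderiv i q := by
  rw [EOp, LinearMap.sum_apply]
  refine Finset.sum_congr rfl fun i _ => ?_
  change sgn m i • (X i * (sgn m i • pderiv i q)) = _
  rw [mul_smul_comm, smul_smul, sgn_mul_self, one_smul]

lemma EOp_apply_of_isHomogeneous (m : ℕ) {q : Pm m} {n : ℕ} (hq : q.IsHomogeneous n) :
    EOp m q = (n : ℂ) • q := by
  rw [EOp_apply, hq.sum_X_mul_pderiv, Nat.cast_smul_eq_nsmul]

lemma LapOp_apply (m : ℕ) (q : Pm m) : LapOp m q = ∑ i, sgn m i • pderiv i (pderiv i q) := by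
  rw [LapOp, LinearMap.sum_apply]
  refine Finset.sum_congr rfl fun i _ => ?_
  change sgn m i • (sgn m i • pderiv i (sgn m i • pderiv i q)) = _
  rw [Derivation.map_smul, smul_smul, smul_smul, sgn_mul_self, one_mul]

section LinearForm

variable (m : ℕ) (x : Fin m → ℂ)

lemma isHomogeneous_xz : (xz m x).IsHomogeneous 1 :=
  IsHomogeneous.sum _ _ _ fun i _ => isHomogeneous_C_mul_X _ i

lemma pderiv_xz (i : Fin m) : pderiv i (xz m x) = C (2 * x i) := by
  classical
  simp [xz, map_sum, pderiv_X, Pi.single_apply]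

lemma pderiv_xz_pow_succ (i : Fin m) (n : ℕ) :
    pderiv i (xz m x ^ (n + 1)) = (((n : ℂ) + 1) * (2 * x i)) • xz m x ^ n := by
  rw [Derivation.leibniz_pow, pderiv_xz, Nat.add_sub_cancel, smul_eq_mul, mul_comm,
    ← smul_eq_C_mul, ← Nat.cast_smul_eq_nsmul ℂ, smul_smul]
  push_cast
  ring_nf

lemma LapOp_xz_pow_add_two (n : ℕ) :
    LapOp m (xz m x ^ (n + 2)) =
      (4 * ((n : ℂ) + 2) * ((n : ℂ) + 1) * ∑ i, sgn m i * x i * x i) • xz m x ^ n := by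
  rw [LapOp_apply, Finset.mul_sum, Finset.sum_smul]
  refine Finset.sum_congr rfl fun i _ => ?_
  rw [pderiv_xz_pow_succ, Derivation.map_smul, pderiv_xz_pow_succ, smul_smul, smul_smul]
  push_cast
  ring_nf

lemma LapOp_xz_pow_eq_zero (hx : ∑ i, sgn m i * x i * x i = 0) (n : ℕ) :
    LapOp m (xz m x ^ n) = 0 := by
  match n with
  | 0 => simp [LapOp_apply]
  | 1 => simp [LapOp_apply, pderiv_xz]
  | n + 2 => rw [LapOp_xz_pow_add_two, hx, mul_zero, zero_smul]

lemma BtOp_xz_pow_succ (hx : ∑ i, sgn m i * x i * x i = 0) (i : Fin m) (d : ℕ) :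
    BtOp m i (xz m x ^ (d + 1)) =
      (4 * x i * ((d : ℂ) + 1) * ((d : ℂ) + (m : ℂ) / 2 - 1)) • xz m x ^ d := by
  have hE : EOp m (xz m x ^ d) = (d : ℂ) • xz m x ^ d := by
    simpa using EOp_apply_of_isHomogeneous m ((isHomogeneous_xz m x).pow d)
  change sgn m i • (((m : ℂ) - 2) • dlow m i _ + (2 : ℂ) • EOp m (dlow m i _)
    - X i * LapOp m _) = _
  rw [LapOp_xz_pow_eq_zero m x hx, mul_zero, sub_zero, dlow_apply, pderiv_xz_pow_succ,
    map_smul, map_smul, hE]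
  simp only [smul_smul]
  rw [← add_smul, smul_smul]
  congr 1
  linear_combination (2 * x i * ((d : ℂ) + 1) * ((m : ℂ) - 2 + 2 * d)) * sgn_mul_self m i

end LinearForm

lemma Bcoef_succ_mul (m : ℕ) (hm : 3 ≤ m) (d : ℕ) :
    Bcoef m (d + 1) * (((d : ℂ) + 1) * ((d : ℂ) + (m : ℂ) / 2 - 1)) = Bcoef m d := by
  have hΓ_arg : Complex.Gamma (((d + 1 : ℕ) : ℂ) + (m : ℂ) / 2 - 1) =
      Complex.Gamma (((d : ℂ) + (m : ℂ) / 2 - 1) + 1) := by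
    congr 1
    push_cast
    ring
  rw [Bcoef, Bcoef, hΓ_arg, Nat.factorial_succ, Nat.cast_mul]
  set s : ℂ := (d : ℂ) + (m : ℂ) / 2 - 1
  have hs_re : 0 < s.re := by
    have : (3 : ℝ) ≤ m := by exact_mod_cast hm
    simp only [s, Complex.sub_re, Complex.add_re, Complex.div_ofNat_re, Complex.natCast_re,
      Complex.one_re]
    linarith [(d.cast_nonneg : (0 : ℝ) ≤ d)]
  have hs : s ≠ 0 := fun h => by simp [h] at hs_re
  have hΓ : Complex.Gamma s ≠ 0 := Complex.Gamma_ne_zero_of_re_pos hs_re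
  have hd : ((d : ℂ) + 1) ≠ 0 := by exact_mod_cast d.succ_ne_zero
  rw [Complex.Gamma_add_one s hs]
  clear_value s
  push_cast
  field_simp

/-- `B_0(x|z)` is an eigenfunction of the modified Bessel operators in `z`,
`B̃(z_i) B_0(x|z) = 4x_i B_0(x|z)`, coefficientwise in the power series expansion
`B_0(x|z) = ∑_d Bcoef d · (x|z)^d`, modulo `⟨R²_x⟩` in the `x`-variables (i.e., for
`x` on the null cone `R²_x = 0`). -/
theorem stmt17 (m : ℕ) (hm : 3 ≤ m) (x : Fin m → ℂ)
    (hx : (∑ i, sgn m i * x i * x i) = 0) :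
    ∀ (i : Fin m) (d : ℕ),
      BtOp m i (Bcoef m (d + 1) • (xz m x) ^ (d + 1)) =
        ((4 : ℂ) * x i) • (Bcoef m d • (xz m x) ^ d) := by
  intro i d
  rw [map_smul, BtOp_xz_pow_succ m x hx, smul_smul, smul_smul, ← Bcoef_succ_mul m hm d]
  congr 1
  ring
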